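/- For probability measures P, Q with densities p, q satisfying the third-moment conditions ∫ p |log(p/q)|³ dλ < ∞ and ∫ q |log(p/q)|³ dλ < ∞, define the tilted measure Q_α with density q_α = p^α q^{1−α}/Z(α) for α ∈ (0,1). Then D(Q_α‖P) is differentiable in α with d/dα D(Q_α‖P) = −(1−α)·Var(log(dP/dQ)(X^{(α)})), where X^{(α)} ∼ Q_α. -/

import Mathlib

open MeasureTheory Real Set

noncomputable def Zfun {A : Type*} [MeasurableSpace A] (μ : Measure A) (p q : A → ℝ) (a : ℝ) : ℝ :=
  ∫ x, p x ^ a * q x ^ (1-a) ∂μ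

/-- Density of the tilted measure `Q_α`. -/
noncomputable def qdens {A : Type*} [MeasurableSpace A] (μ : Measure A) (p q : A → ℝ) (a : ℝ) (x : A) : ℝ :=
  p x ^ a * q x ^ (1-a) / Zfun μ p q a

/-- `D(Q_α ‖ P)`. -/
noncomputable def DtiltP {A : Type*} [MeasurableSpace A] (μ : Measure A) (p q : A → ℝ) (a : ℝ) : ℝ :=
  ∫ x, qdens μ p q a x * Real.log (qdens μ p q a x / p x) ∂μ

/-- `D(Q_α ‖ Q)`. -/
noncomputable def DtiltQ {A : Type*} [MeasurableSpace A] (μ : Measure A) (p q : A → ℝ) (a : ℝ) : ℝ :=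
  ∫ x, qdens μ p q a x * Real.log (qdens μ p q a x / q x) ∂μ

/-- Mean of the log-likelihood ratio `log(p/q)` under `Q_α`. -/
noncomputable def tiltMean {A : Type*} [MeasurableSpace A] (μ : Measure A) (p q : A → ℝ) (a : ℝ) : ℝ :=
  ∫ x, qdens μ p q a x * Real.log (p x / q x) ∂μ

/-- Variance of `log(p/q)` under `Q_α`. -/
noncomputable def tiltVar {A : Type*} [MeasurableSpace A] (μ : Measure A) (p q : A → ℝ) (a : ℝ) : ℝ :=
  (∫ x, qdens μ p q a x * (Real.log (p x / q x))^2 ∂μ) - (tiltMean μ p q a)^2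

/-- Third central moment of `log(p/q)` under `Q_α`. -/
noncomputable def tiltM3 {A : Type*} [MeasurableSpace A] (μ : Measure A) (p q : A → ℝ) (a : ℝ) : ℝ :=
  ∫ x, qdens μ p q a x * (Real.log (p x / q x) - tiltMean μ p q a)^3 ∂μ

/-- Absolute third central moment of `log(p/q)` under `Q_α`. -/
noncomputable def tiltM3abs {A : Type*} [MeasurableSpace A] (μ : Measure A) (p q : A → ℝ) (a : ℝ) : ℝ :=
  ∫ x, qdens μ p q a x * |Real.log (p x / q x) - tiltMean μ p q a|^3 ∂μ

/-!
For `0 < α < 1` write `F_α = p^α q^(1-α)` and `L = log (p / q)`. On the support of `F_α`, which does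
not depend on `α`, one has `F_α = q e^(α L)`, so `∂_α F_α = F_α L`; the third-moment hypotheses
dominate `F_β |L|^k` (`k ≤ 3`) uniformly in `β ∈ [0, 1]`, so `Z` and the moments `∫ F_α L^k`
may be differentiated under the integral sign. Since `log (q_α / p) = (α - 1) L - log Z(α)`,
`D(Q_α ‖ P) = (α - 1) m(α) - log Z(α)` with `m = tiltMean`, and `(log Z)' = m`, `m' = tiltVar`.
If `P` and `Q` are mutually singular, `Z` vanishes on `(0, 1)` and both sides are `0`.
-/

open Filter Topology

noncomputable def tiltWeight {A : Type*} (p q : A → ℝ) (a : ℝ) (x : A) : ℝ :=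
  p x ^ a * q x ^ (1 - a)

section Pointwise

variable {a b t : ℝ}

lemma rpow_mul_rpow_one_sub_eq_ite (ha : 0 ≤ a) (hb : 0 ≤ b) (ht : t ∈ Ioo 0 1) :
    a ^ t * b ^ (1 - t) = if 0 < a ∧ 0 < b then b * exp (t * log (a / b)) else 0 := by
  split_ifs with h
  · obtain ⟨ha, hb⟩ := h
    rw [rpow_def_of_pos ha, rpow_def_of_pos hb, ← exp_add, log_div ha.ne' hb.ne',
      show log a * t + log b * (1 - t) = log b + t * (log a - log b) by ring, exp_add, exp_log hb]
  · rcases not_and_or.1 h with h | h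
    · rw [le_antisymm (not_lt.1 h) ha, zero_rpow ht.1.ne', zero_mul]
    · rw [le_antisymm (not_lt.1 h) hb, zero_rpow (sub_ne_zero.2 ht.2.ne'), mul_zero]

lemma rpow_mul_rpow_one_sub_ne_zero_iff (ha : 0 ≤ a) (hb : 0 ≤ b) (ht : t ∈ Ioo 0 1) :
    a ^ t * b ^ (1 - t) ≠ 0 ↔ 0 < a ∧ 0 < b := by
  rw [rpow_mul_rpow_one_sub_eq_ite ha hb ht]
  split_ifs with h
  · exact iff_of_true (mul_ne_zero h.2.ne' (exp_pos _).ne') h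
  · exact iff_of_false (not_not.2 rfl) h

lemma rpow_mul_rpow_one_sub_le_add (ha : 0 ≤ a) (hb : 0 ≤ b) (ht : t ∈ Icc 0 1) :
    a ^ t * b ^ (1 - t) ≤ a + b := by
  have := geom_mean_le_arith_mean2_weighted ht.1 (sub_nonneg.2 ht.2) ha hb (by ring)
  nlinarith [ht.1, ht.2]

lemma hasDerivAt_rpow_mul_rpow_one_sub (ha : 0 ≤ a) (hb : 0 ≤ b) (ht : t ∈ Ioo 0 1) :
    HasDerivAt (fun s => a ^ s * b ^ (1 - s)) (a ^ t * b ^ (1 - t) * log (a / b)) t := by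
  have hloc : (fun s => a ^ s * b ^ (1 - s)) =ᶠ[𝓝 t]
      fun s => if 0 < a ∧ 0 < b then b * exp (s * log (a / b)) else 0 := by
    filter_upwards [Ioo_mem_nhds ht.1 ht.2] with s hs using rpow_mul_rpow_one_sub_eq_ite ha hb hs
  refine HasDerivAt.congr_of_eventuallyEq ?_ hloc
  rw [rpow_mul_rpow_one_sub_eq_ite ha hb ht]
  split_ifs
  · simpa [mul_assoc] using (((hasDerivAt_id t).mul_const (log (a / b))).exp).const_mul b
  · simpa using hasDerivAt_const t (0 : ℝ)

/-- The pointwise form of `log (q_α / p) = (α - 1) log (p / q) - log Z`, valid also where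
`q_α = 0` and when `Z = 0`. -/
lemma rpow_mul_rpow_one_sub_div_mul_log (ha : 0 ≤ a) (hb : 0 ≤ b) (ht : t ∈ Ioo 0 1) (z : ℝ) :
    a ^ t * b ^ (1 - t) / z * log (a ^ t * b ^ (1 - t) / z / a) =
      a ^ t * b ^ (1 - t) / z * ((t - 1) * log (a / b) - log z) := by
  by_cases h : a ^ t * b ^ (1 - t) / z = 0
  · rw [h, zero_mul, zero_mul]
  obtain ⟨hw, hz⟩ := div_ne_zero_iff.1 h
  obtain ⟨ha, hb⟩ := (rpow_mul_rpow_one_sub_ne_zero_iff ha hb ht).1 hw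
  rw [rpow_mul_rpow_one_sub_eq_ite ha.le hb.le ht, if_pos ⟨ha, hb⟩]
  rw [log_div (by positivity) ha.ne', log_div (by positivity) hz, log_mul hb.ne' (exp_pos _).ne',
    log_exp, log_div ha.ne' hb.ne']
  ring

lemma pow_abs_le_one_add_pow_abs_three (t : ℝ) {k : ℕ} (hk : k ≤ 3) : |t| ^ k ≤ 1 + |t| ^ 3 := by
  rcases le_total |t| 1 with h | h
  · linarith [pow_le_one₀ (n := k) (abs_nonneg t) h, pow_nonneg (abs_nonneg t) 3]
  · linarith [pow_le_pow_right₀ h hk]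

end Pointwise

section Tilt

variable {A : Type*} {p q : A → ℝ}

lemma norm_tiltWeight_mul_pow_le (hp0 : ∀ x, 0 ≤ p x) (hq0 : ∀ x, 0 ≤ q x) {k : ℕ} (hk : k ≤ 3)
    {β : ℝ} (hβ : β ∈ Icc 0 1) (x : A) :
    ‖tiltWeight p q β x * log (p x / q x) ^ k‖ ≤ (p x + q x) * (1 + |log (p x / q x)| ^ 3) := by
  rw [norm_mul, norm_pow, Real.norm_eq_abs, Real.norm_eq_abs, tiltWeight,
    abs_of_nonneg (mul_nonneg (rpow_nonneg (hp0 x) _) (rpow_nonneg (hq0 x) _))]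
  exact mul_le_mul (rpow_mul_rpow_one_sub_le_add (hp0 x) (hq0 x) hβ)
    (pow_abs_le_one_add_pow_abs_three _ hk) (by positivity) (add_nonneg (hp0 x) (hq0 x))

variable [MeasurableSpace A] {μ : Measure A}

lemma integrable_add_mul_one_add_pow_abs_log (hp : Integrable p μ) (hq : Integrable q μ)
    (hP3 : Integrable (fun x => p x * |log (p x / q x)| ^ 3) μ)
    (hQ3 : Integrable (fun x => q x * |log (p x / q x)| ^ 3) μ) :
    Integrable (fun x => (p x + q x) * (1 + |log (p x / q x)| ^ 3)) μ := by
  refine ((hp.add hq).add (hP3.add hQ3)).congr (.of_forall fun x => ?_)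
  simp only [Pi.add_apply]
  ring

lemma measurable_tiltWeight_mul_pow (hp : Measurable p) (hq : Measurable q) (β : ℝ) (k : ℕ) :
    Measurable (fun x => tiltWeight p q β x * log (p x / q x) ^ k) :=
  ((hp.pow_const _).mul (hq.pow_const _)).mul ((measurable_log.comp (hp.div hq)).pow_const k)

lemma integrable_tiltWeight_mul_pow (hp : Measurable p) (hq : Measurable q)
    (hp0 : ∀ x, 0 ≤ p x) (hq0 : ∀ x, 0 ≤ q x)
    (hB : Integrable (fun x => (p x + q x) * (1 + |log (p x / q x)| ^ 3)) μ)
    {k : ℕ} (hk : k ≤ 3) {β : ℝ} (hβ : β ∈ Icc 0 1) :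
    Integrable (fun x => tiltWeight p q β x * log (p x / q x) ^ k) μ := by
  refine hB.mono' ?_ (.of_forall (norm_tiltWeight_mul_pow_le hp0 hq0 hk hβ))
  exact (measurable_tiltWeight_mul_pow hp hq β k).aestronglyMeasurable

lemma hasDerivAt_integral_tiltWeight_mul_pow (hp : Measurable p) (hq : Measurable q)
    (hp0 : ∀ x, 0 ≤ p x) (hq0 : ∀ x, 0 ≤ q x)
    (hB : Integrable (fun x => (p x + q x) * (1 + |log (p x / q x)| ^ 3)) μ)
    {k : ℕ} (hk : k ≤ 2) {α : ℝ} (hα : α ∈ Ioo 0 1) :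
    HasDerivAt (fun β => ∫ x, tiltWeight p q β x * log (p x / q x) ^ k ∂μ)
      (∫ x, tiltWeight p q α x * log (p x / q x) ^ (k + 1) ∂μ) α := by
  refine (hasDerivAt_integral_of_dominated_loc_of_deriv_le
    (F := fun β x => tiltWeight p q β x * log (p x / q x) ^ k) (Ioo_mem_nhds hα.1 hα.2)
    (.of_forall fun β => (measurable_tiltWeight_mul_pow hp hq β k).aestronglyMeasurable)
    (integrable_tiltWeight_mul_pow hp hq hp0 hq0 hB (by omega) (Ioo_subset_Icc_self hα))
    (measurable_tiltWeight_mul_pow hp hq α (k + 1)).aestronglyMeasurable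
    (.of_forall fun x β hβ =>
      norm_tiltWeight_mul_pow_le hp0 hq0 (by omega) (Ioo_subset_Icc_self hβ) x) hB
    (.of_forall fun x β hβ => ?_)).2
  rw [pow_succ', ← mul_assoc]
  exact (hasDerivAt_rpow_mul_rpow_one_sub (hp0 x) (hq0 x) hβ).mul_const _

lemma integral_qdens_mul (a : ℝ) (g : A → ℝ) :
    ∫ x, qdens μ p q a x * g x ∂μ = (∫ x, tiltWeight p q a x * g x ∂μ) / Zfun μ p q a := by
  rw [← integral_div]
  exact integral_congr_ae (.of_forall fun x => div_mul_eq_mul_div _ _ _)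

lemma tiltMean_eq_div (a : ℝ) :
    tiltMean μ p q a = (∫ x, tiltWeight p q a x * log (p x / q x) ^ 1 ∂μ) / Zfun μ p q a := by
  simp only [pow_one]
  exact integral_qdens_mul a _

lemma Zfun_eq_integral (a : ℝ) :
    Zfun μ p q a = ∫ x, tiltWeight p q a x * log (p x / q x) ^ 0 ∂μ := by
  simp only [pow_zero, mul_one]
  rfl

lemma Zfun_eq_zero_iff (hp : Measurable p) (hq : Measurable q)
    (hp0 : ∀ x, 0 ≤ p x) (hq0 : ∀ x, 0 ≤ q x)
    (hB : Integrable (fun x => (p x + q x) * (1 + |log (p x / q x)| ^ 3)) μ)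
    {β : ℝ} (hβ : β ∈ Ioo 0 1) :
    Zfun μ p q β = 0 ↔ μ {x | 0 < p x ∧ 0 < q x} = 0 := by
  have hint := integrable_tiltWeight_mul_pow hp hq hp0 hq0 hB (k := 0) (by omega)
    (Ioo_subset_Icc_self hβ)
  simp only [pow_zero, mul_one] at hint
  have hnonneg : 0 ≤ tiltWeight p q β := fun x =>
    mul_nonneg (rpow_nonneg (hp0 x) _) (rpow_nonneg (hq0 x) _)
  change ∫ x, tiltWeight p q β x ∂μ = 0 ↔ _
  rw [← (integral_nonneg hnonneg).not_lt_iff_eq', integral_pos_iff_support_of_nonneg hnonneg hint,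
    show Function.support (tiltWeight p q β) = {x | 0 < p x ∧ 0 < q x} from
      Set.ext fun x => rpow_mul_rpow_one_sub_ne_zero_iff (hp0 x) (hq0 x) hβ,
    not_lt, nonpos_iff_eq_zero]

lemma hasDerivAt_Zfun (hp : Measurable p) (hq : Measurable q)
    (hp0 : ∀ x, 0 ≤ p x) (hq0 : ∀ x, 0 ≤ q x)
    (hB : Integrable (fun x => (p x + q x) * (1 + |log (p x / q x)| ^ 3)) μ)
    {α : ℝ} (hα : α ∈ Ioo 0 1) :
    HasDerivAt (Zfun μ p q) (∫ x, tiltWeight p q α x * log (p x / q x) ^ 1 ∂μ) α := by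
  have h := hasDerivAt_integral_tiltWeight_mul_pow hp hq hp0 hq0 hB (k := 0) (by omega) hα
  rwa [← funext Zfun_eq_integral] at h

lemma hasDerivAt_tiltMean (hp : Measurable p) (hq : Measurable q)
    (hp0 : ∀ x, 0 ≤ p x) (hq0 : ∀ x, 0 ≤ q x)
    (hB : Integrable (fun x => (p x + q x) * (1 + |log (p x / q x)| ^ 3)) μ)
    {α : ℝ} (hα : α ∈ Ioo 0 1) (hZ : Zfun μ p q α ≠ 0) :
    HasDerivAt (tiltMean μ p q) (tiltVar μ p q α) α := by
  have hI := hasDerivAt_integral_tiltWeight_mul_pow hp hq hp0 hq0 hB (k := 1) (by omega) hα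
  rw [funext tiltMean_eq_div]
  refine (hI.div (hasDerivAt_Zfun hp hq hp0 hq0 hB hα) hZ).congr_deriv ?_
  rw [tiltVar, tiltMean_eq_div, integral_qdens_mul]
  field_simp

lemma hasDerivAt_log_Zfun (hp : Measurable p) (hq : Measurable q)
    (hp0 : ∀ x, 0 ≤ p x) (hq0 : ∀ x, 0 ≤ q x)
    (hB : Integrable (fun x => (p x + q x) * (1 + |log (p x / q x)| ^ 3)) μ)
    {α : ℝ} (hα : α ∈ Ioo 0 1) (hZ : Zfun μ p q α ≠ 0) :
    HasDerivAt (fun β => log (Zfun μ p q β)) (tiltMean μ p q α) α := by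
  rw [tiltMean_eq_div]
  exact (hasDerivAt_Zfun hp hq hp0 hq0 hB hα).log hZ

lemma DtiltP_eq (hp : Measurable p) (hq : Measurable q)
    (hp0 : ∀ x, 0 ≤ p x) (hq0 : ∀ x, 0 ≤ q x)
    (hB : Integrable (fun x => (p x + q x) * (1 + |log (p x / q x)| ^ 3)) μ)
    {β : ℝ} (hβ : β ∈ Ioo 0 1) :
    DtiltP μ p q β = (β - 1) * tiltMean μ p q β - log (Zfun μ p q β) := by
  have hint : ∀ k ≤ 3, Integrable (fun x => tiltWeight p q β x * log (p x / q x) ^ k) μ :=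
    fun k hk => integrable_tiltWeight_mul_pow hp hq hp0 hq0 hB hk (Ioo_subset_Icc_self hβ)
  calc DtiltP μ p q β
      = ∫ x, qdens μ p q β x * ((β - 1) * log (p x / q x) - log (Zfun μ p q β)) ∂μ :=
        integral_congr_ae (.of_forall fun x =>
          rpow_mul_rpow_one_sub_div_mul_log (hp0 x) (hq0 x) hβ _)
    _ = ((β - 1) * (∫ x, tiltWeight p q β x * log (p x / q x) ^ 1 ∂μ) -
          log (Zfun μ p q β) * ∫ x, tiltWeight p q β x * log (p x / q x) ^ 0 ∂μ) /
          Zfun μ p q β := by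
        rw [integral_qdens_mul, ← integral_const_mul, ← integral_const_mul,
          ← integral_sub ((hint 1 (by omega)).const_mul _) ((hint 0 (by omega)).const_mul _)]
        exact congrArg (· / _) (integral_congr_ae (.of_forall fun x => by dsimp only; ring))
    _ = (β - 1) * tiltMean μ p q β - log (Zfun μ p q β) := by
        rw [← Zfun_eq_integral, tiltMean_eq_div]
        rcases eq_or_ne (Zfun μ p q β) 0 with hZ | hZ
        · simp [hZ]
        · field_simp

end Tilt

theorem DtiltP_deriv_general {A : Type*} [MeasurableSpace A]
    (μ : Measure A)
    (p q : A → ℝ) (hp : Measurable p) (hq : Measurable q)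
    (hp0 : ∀ x, 0 ≤ p x) (hq0 : ∀ x, 0 ≤ q x)
    (hpint : ∫ x, p x ∂μ = 1) (hqint : ∫ x, q x ∂μ = 1)
    (hP3 : Integrable (fun x => p x * |Real.log (p x / q x)|^3) μ)
    (hQ3 : Integrable (fun x => q x * |Real.log (p x / q x)|^3) μ) :
    ∀ α ∈ Set.Ioo (0:ℝ) 1,
      HasDerivAt (DtiltP μ p q) (-(1-α) * tiltVar μ p q α) α := by
  intro α hα
  have hB := integrable_add_mul_one_add_pow_abs_log
    (.of_integral_ne_zero (by simp [hpint])) (.of_integral_ne_zero (by simp [hqint])) hP3 hQ3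
  by_cases hS : μ {x | 0 < p x ∧ 0 < q x} = 0
  · have hZ : ∀ β ∈ Ioo (0 : ℝ) 1, Zfun μ p q β = 0 := fun β hβ =>
      (Zfun_eq_zero_iff hp hq hp0 hq0 hB hβ).2 hS
    have hD : DtiltP μ p q =ᶠ[𝓝 α] fun _ => 0 := by
      filter_upwards [Ioo_mem_nhds hα.1 hα.2] with β hβ
      simp [DtiltP, qdens, hZ β hβ]
    simpa [tiltVar, tiltMean, qdens, hZ α hα] using
      (hasDerivAt_const α (0 : ℝ)).congr_of_eventuallyEq hD
  · have hZ : Zfun μ p q α ≠ 0 := mt (Zfun_eq_zero_iff hp hq hp0 hq0 hB hα).1 hS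
    have hD : DtiltP μ p q =ᶠ[𝓝 α] fun β => (β - 1) * tiltMean μ p q β - log (Zfun μ p q β) := by
      filter_upwards [Ioo_mem_nhds hα.1 hα.2] with β hβ using DtiltP_eq hp hq hp0 hq0 hB hβ
    have hrhs := (((hasDerivAt_id' α).sub_const 1).mul
      (hasDerivAt_tiltMean hp hq hp0 hq0 hB hα hZ)).sub (hasDerivAt_log_Zfun hp hq hp0 hq0 hB hα hZ)
    refine (hrhs.congr_deriv ?_).congr_of_eventuallyEq hD
    ring

theorem DtiltP_deriv {A : Type*} [MeasurableSpace A]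
    (μ : Measure A) [SigmaFinite μ]
    (p q : A → ℝ) (hp : Measurable p) (hq : Measurable q)
    (hp0 : ∀ x, 0 ≤ p x) (hq0 : ∀ x, 0 ≤ q x)
    (hpint : ∫ x, p x ∂μ = 1) (hqint : ∫ x, q x ∂μ = 1)
    (hP3 : Integrable (fun x => p x * |Real.log (p x / q x)|^3) μ)
    (hQ3 : Integrable (fun x => q x * |Real.log (p x / q x)|^3) μ) :
    ∀ α ∈ Set.Ioo (0:ℝ) 1,
      HasDerivAt (DtiltP μ p q) (-(1-α) * tiltVar μ p q α) α :=
  DtiltP_deriv_general μ p q hp hq hp0 hq0 hpint hqint hP3 hQ3
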